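/- arXiv:1911.01924 — 5 statements merged into one kernel-verified Lean document; each statement's English description precedes it below -/
import Mathlib

section
/- Let p, q and r be distinct primes and let G be a finite group lying in 𝔄_p𝔄_q𝔄_r. Then there exist subgroups P, Q, R of G such that: P is a normal Sylow p-subgroup of G; Q is a Sylow q-subgroup of G and R is a Sylow r-subgroup of G; P, Q and R are abelian of exponent dividing p, q and r respectively; R normalizes Q; the subgroup generated by Q and R lies in 𝔄_q𝔄_r; and the subgroup generated by P, Q and R is all of G. -/
/-- A group is abelian of exponent dividing `p`. -/
def ElemAbelian (p : ℕ) (G : Type*) [Group G] : Prop :=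
  (∀ a b : G, a * b = b * a) ∧ ∀ a : G, a ^ p = 1

/-- `G` lies in the product variety `𝔄_p𝔄_q`: there is a normal subgroup `N` that is
abelian of exponent dividing `p` such that `G/N` is abelian of exponent dividing `q`
(expressed by: all commutators and all `q`-th powers lie in `N`). -/
def InApAq (p q : ℕ) (G : Type*) [Group G] : Prop :=
  ∃ N : Subgroup G, N.Normal ∧ ElemAbelian p N ∧
    (∀ a b : G, a * b * a⁻¹ * b⁻¹ ∈ N) ∧ ∀ a : G, a ^ q ∈ N

/-- `G` lies in `𝔄_p𝔄_q𝔄_r`: there is a normal subgroup `N`, abelian of exponent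
dividing `p`, with `G/N ∈ 𝔄_q𝔄_r`. -/
def InApAqAr (p q r : ℕ) (G : Type*) [Group G] : Prop :=
  ∃ N : Subgroup G, ∃ _ : N.Normal, ElemAbelian p N ∧ InApAq q r (G ⧸ N)

/-- A Sylow `p`-subgroup: a `p`-subgroup whose index is coprime to `p`. -/
def IsSylow' (p : ℕ) {G : Type*} [Group G] (P : Subgroup G) : Prop :=
  IsPGroup p P ∧ Nat.Coprime P.index p

/-!
The normal subgroup `N` with `G ⧸ N ∈ 𝔄_q𝔄_r` is a `p`-group and `G ⧸ N` has exponent dividing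
`q * r`, so `N` is a normal Sylow `p`-subgroup and, by Schur–Zassenhaus, has a complement
`H ≅ G ⧸ N`. The same argument inside `H ∈ 𝔄_q𝔄_r` splits `H = Q ⋊ R`; commutators and `r`-th
powers of `R` lie in `Q ∩ R = 1`, so `R` is abelian of exponent dividing `r`. The Sylow indices
are read off from `|G| = |N| |Q| |R|`.
-/

section

variable {p q : ℕ} {G H : Type*} [Group G] [Group H]

theorem IsPGroup.card_coprime [Finite G] (hp : p.Prime) (hG : IsPGroup p G) (hpq : p.Coprime q) :
    (Nat.card G).Coprime q := by
  have := Fact.mk hp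
  obtain ⟨n, hn⟩ := hG.exists_card_eq
  rw [hn]
  exact hpq.pow_left n

theorem ElemAbelian.isPGroup (h : ElemAbelian p G) : IsPGroup p G :=
  fun g => ⟨1, by rw [pow_one]; exact h.2 g⟩

theorem ElemAbelian.of_mulEquiv (e : G ≃* H) (h : ElemAbelian p G) : ElemAbelian p H :=
  ⟨fun a b => e.symm.injective (by simp [h.1]), fun a => e.symm.injective (by simp [h.2])⟩

theorem ElemAbelian.of_disjoint {N K : Subgroup G} (hNK : Disjoint N K)
    (hcomm : ∀ a b : G, a * b * a⁻¹ * b⁻¹ ∈ N) (hpow : ∀ a : G, a ^ q ∈ N) :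
    ElemAbelian q K := by
  refine ⟨fun a b => Subtype.ext ?_, fun a => Subtype.ext ?_⟩
  · have h : (a * b * a⁻¹ * b⁻¹ : G) = 1 :=
      Subgroup.disjoint_def.mp hNK (hcomm a b) (a * b * a⁻¹ * b⁻¹).2
    simpa [mul_inv_eq_one, mul_inv_eq_iff_eq_mul] using h
  · exact Subgroup.disjoint_def.mp hNK (hpow a) (a ^ q).2

theorem InApAq.of_mulEquiv (e : G ≃* H) (h : InApAq p q G) : InApAq p q H := by
  obtain ⟨N, hN, hNab, hcomm, hpow⟩ := h
  refine ⟨N.map e.toMonoidHom, hN.map _ e.surjective,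
    hNab.of_mulEquiv (N.equivMapOfInjective _ e.injective), fun a b => ?_, fun a => ?_⟩
  · exact ⟨_, hcomm (e.symm a) (e.symm b), by simp⟩
  · exact ⟨_, hpow (e.symm a), by simp⟩

theorem InApAq.pow_mul_eq_one (h : InApAq p q G) (a : G) : a ^ (q * p) = 1 := by
  obtain ⟨N, -, hNab, -, hpow⟩ := h
  rw [pow_mul]
  simpa using congrArg Subtype.val (hNab.2 ⟨_, hpow a⟩)

theorem Subgroup.index_coprime_of_pow_mem [Finite G] {N : Subgroup G} [N.Normal] {m : ℕ}
    (hp : p.Prime) (hpm : p.Coprime m) (h : ∀ a : G, a ^ m ∈ N) : N.index.Coprime p := by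
  have := Fact.mk hp
  rw [index_eq_card, Nat.coprime_comm, hp.coprime_iff_not_dvd]
  intro hdvd
  obtain ⟨x, hx⟩ := exists_prime_orderOf_dvd_card' p hdvd
  induction x using QuotientGroup.induction_on with
  | H a =>
    have : orderOf (a : G ⧸ N) ∣ m := orderOf_dvd_of_pow_eq_one <| by
      rw [← QuotientGroup.mk_pow, QuotientGroup.eq_one_iff]
      exact h a
    exact hp.one_lt.ne' (hpm.eq_one_of_dvd (hx ▸ this))

theorem Subgroup.exists_isComplement'_of_pow_mem [Finite G] {N : Subgroup G} [N.Normal] {m : ℕ}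
    (hp : p.Prime) (hN : IsPGroup p N) (hpm : p.Coprime m) (h : ∀ a : G, a ^ m ∈ N) :
    ∃ K : Subgroup G, N.IsComplement' K :=
  exists_right_complement'_of_coprime
    (hN.card_coprime hp (index_coprime_of_pow_mem hp hpm h).symm)

theorem InApAq.exists_isComplement' [Finite G] (hp : p.Prime) (hpq : p.Coprime q)
    (h : InApAq p q G) :
    ∃ N K : Subgroup G, N.Normal ∧ N.IsComplement' K ∧ ElemAbelian p N ∧ ElemAbelian q K := by
  obtain ⟨N, hN, hNab, hcomm, hpow⟩ := h
  obtain ⟨K, hNK⟩ := Subgroup.exists_isComplement'_of_pow_mem hp hNab.isPGroup hpq hpow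
  exact ⟨N, K, hN, hNK, hNab, .of_disjoint hNK.disjoint hcomm hpow⟩

end

section

variable {q : ℕ} {G : Type*} [Group G] {N K : Subgroup G} {A B : Subgroup K}

theorem Subgroup.IsComplement'.isSylow'_map_subtype (hNK : N.IsComplement' K)
    (hAB : A.IsComplement' B) (hA : IsPGroup q A) (hB : (Nat.card B).Coprime q)
    (hN : (Nat.card N).Coprime q) : IsSylow' q (A.map K.subtype) := by
  refine ⟨hA.map K.subtype, ?_⟩
  rw [Subgroup.index_map_subtype, hAB.symm.index_eq_card, hNK.index_eq_card]
  exact hB.mul_left hN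

theorem Subgroup.IsComplement'.map_subtype_sup_map_subtype (hAB : A.IsComplement' B) :
    A.map K.subtype ⊔ B.map K.subtype = K := by
  rw [← Subgroup.map_sup, hAB.sup_eq_top, ← MonoidHom.range_eq_map, Subgroup.range_subtype]

theorem Subgroup.map_subtype_le_normalizer_map_subtype [A.Normal] :
    B.map K.subtype ≤ Subgroup.normalizer (A.map K.subtype : Set G) :=
  (Subgroup.map_mono (Subgroup.normalizer_eq_top (H := A) ▸ le_top)).trans
    (Subgroup.le_normalizer_map _)

end

/-- A finite group `G ∈ 𝔄_p𝔄_q𝔄_r` has a normal Sylow `p`-subgroup `P`,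
a Sylow `q`-subgroup `Q` and a Sylow `r`-subgroup `R`, elementary abelian of the respective
exponents, such that `R` normalises `Q`, the subgroup `⟨Q, R⟩` lies in `𝔄_q𝔄_r`, and
`⟨P, Q, R⟩ = G`. -/
theorem structure_of_group_in_ApAqAr (p q r : ℕ) (hp : p.Prime) (hq : q.Prime) (hr : r.Prime)
    (hpq : p ≠ q) (hpr : p ≠ r) (hqr : q ≠ r)
    (G : Type*) [Group G] [Finite G] (hG : InApAqAr p q r G) :
    ∃ P Q R : Subgroup G,
      P.Normal ∧ IsSylow' p P ∧ IsSylow' q Q ∧ IsSylow' r R ∧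
      ElemAbelian p P ∧ ElemAbelian q Q ∧ ElemAbelian r R ∧
      R ≤ Subgroup.normalizer (Q : Set G) ∧ InApAq q r ↥(Q ⊔ R) ∧ P ⊔ Q ⊔ R = ⊤ := by
  have hpq' := (Nat.coprime_primes hp hq).mpr hpq
  have hpr' := (Nat.coprime_primes hp hr).mpr hpr
  have hqr' := (Nat.coprime_primes hq hr).mpr hqr
  have hpqr := hpr'.mul_right hpq'
  obtain ⟨N, hN, hNab, hquot⟩ := hG
  have hpow : ∀ a : G, a ^ (r * q) ∈ N := fun a => by
    rw [← QuotientGroup.eq_one_iff, QuotientGroup.mk_pow, hquot.pow_mul_eq_one]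
  obtain ⟨H, hNH⟩ := Subgroup.exists_isComplement'_of_pow_mem hp hNab.isPGroup hpqr hpow
  have hH : InApAq q r H := hquot.of_mulEquiv hNH.symm.QuotientMulEquiv
  obtain ⟨Q, R, hQ, hQR, hQab, hRab⟩ := hH.exists_isComplement' hq hqr'
  have hsup := hQR.map_subtype_sup_map_subtype
  refine ⟨N, Q.map H.subtype, R.map H.subtype, hN,
    ⟨hNab.isPGroup, Subgroup.index_coprime_of_pow_mem hp hpqr hpow⟩,
    hNH.isSylow'_map_subtype hQR hQab.isPGroup (hRab.isPGroup.card_coprime hr hqr'.symm)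
      (hNab.isPGroup.card_coprime hp hpq'),
    hNH.isSylow'_map_subtype hQR.symm hRab.isPGroup (hQab.isPGroup.card_coprime hq hqr')
      (hNab.isPGroup.card_coprime hp hpr'),
    hNab, hQab.of_mulEquiv (Q.equivMapOfInjective _ H.subtype_injective),
    hRab.of_mulEquiv (R.equivMapOfInjective _ H.subtype_injective),
    Subgroup.map_subtype_le_normalizer_map_subtype,
    hH.of_mulEquiv (MulEquiv.subgroupCongr hsup).symm, ?_⟩
  rw [sup_assoc, hsup, hNH.sup_eq_top]
end

section
/- Let p, q and r be distinct primes and let G be a finite group lying in 𝔄_p𝔄_q𝔄_r. Let P be a normal Sylow p-subgroup of G, and let Q be a Sylow q-subgroup of G that is normalized by some Sylow r-subgroup R of G. Then the subgroup of G generated by P and Q is normal in G. -/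
/-! Every element of a group in `𝔄_p𝔄_q𝔄_r` has order dividing `r * q * p`, so by Cauchy's
theorem the order of a finite such group has no prime divisors besides those of `p`, `q`, `r`.
Hence `P ⊔ Q ⊔ R`, whose index is coprime to `p`, `q` and `r`, is all of `G`. Each of `P`, `Q`,
`R` normalizes `P ⊔ Q` (`R` because it normalizes both `P` and `Q`), so `P ⊔ Q` is normal. -/

section Exponent

variable {p q r : ℕ} {G : Type*} [Group G]

lemma ElemAbelian.pow_eq_one_of_mem {N : Subgroup G} (hN : ElemAbelian p N) {x : G}
    (hx : x ∈ N) : x ^ p = 1 := by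
  simpa using congrArg Subtype.val (hN.2 ⟨x, hx⟩)

lemma InApAq.pow_eq_one (hG : InApAq p q G) (x : G) : x ^ (q * p) = 1 := by
  obtain ⟨N, -, hN, -, hpow⟩ := hG
  rw [pow_mul]
  exact hN.pow_eq_one_of_mem (hpow x)

lemma InApAqAr.pow_eq_one (hG : InApAqAr p q r G) (x : G) : x ^ (r * q * p) = 1 := by
  obtain ⟨N, _, hN, hGN⟩ := hG
  have hmem : x ^ (r * q) ∈ N := by
    rw [← QuotientGroup.eq_one_iff, QuotientGroup.mk_pow]
    exact hGN.pow_eq_one _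
  rw [pow_mul]
  exact hN.pow_eq_one_of_mem hmem

end Exponent

lemma Subgroup.eq_top_of_index_coprime {G : Type*} [Group G] [Finite G] {n : ℕ}
    (hG : ∀ g : G, g ^ n = 1) (S : Subgroup G) (hS : S.index.Coprime n) : S = ⊤ := by
  rw [← Subgroup.index_eq_one]
  by_contra hne
  obtain ⟨ℓ, hℓ, hℓS⟩ := Nat.exists_prime_and_dvd hne
  have : Fact ℓ.Prime := ⟨hℓ⟩
  obtain ⟨g, hg⟩ := exists_prime_orderOf_dvd_card' ℓ (hℓS.trans S.index_dvd_card)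
  have hℓn : ℓ ∣ n := hg ▸ orderOf_dvd_of_pow_eq_one (hG g)
  exact hℓ.one_lt.ne' (Nat.eq_one_of_dvd_coprimes hS hℓS hℓn)

theorem PQ_normal_in_ApAqAr_general (p q r : ℕ)
    (G : Type*) [Group G] [Finite G] (hG : InApAqAr p q r G)
    (P Q R : Subgroup G) (hP : IsSylow' p P) (hPn : P.Normal)
    (hQ : IsSylow' q Q) (hR : IsSylow' r R) (hRQ : R ≤ Subgroup.normalizer (Q : Set G)) :
    (P ⊔ Q).Normal := by
  have hRcop := hR.2.coprime_dvd_left (Subgroup.index_dvd_of_le (le_sup_right : R ≤ P ⊔ Q ⊔ R))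
  have hQcop := hQ.2.coprime_dvd_left
    (Subgroup.index_dvd_of_le (le_sup_right.trans le_sup_left : Q ≤ P ⊔ Q ⊔ R))
  have hPcop := hP.2.coprime_dvd_left
    (Subgroup.index_dvd_of_le (le_sup_left.trans le_sup_left : P ≤ P ⊔ Q ⊔ R))
  have htop : P ⊔ Q ⊔ R = ⊤ := Subgroup.eq_top_of_index_coprime hG.pow_eq_one _
    ((hRcop.mul_right hQcop).mul_right hPcop)
  have hRPQ : R ≤ Subgroup.normalizer ((P ⊔ Q : Subgroup G) : Set G) :=
    (le_inf (Subgroup.normalizer_eq_top_iff.mpr hPn ▸ le_top) hRQ).trans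
      (Subgroup.normalizer_inf_normalizer_le_normalizer_sup P Q)
  rw [← Subgroup.normalizer_eq_top_iff, eq_top_iff, ← htop]
  exact sup_le Subgroup.le_normalizer hRPQ

/-- If `G ∈ 𝔄_p𝔄_q𝔄_r` is finite, `P` is a normal Sylow `p`-subgroup and
`Q` is a Sylow `q`-subgroup normalised by some Sylow `r`-subgroup `R`, then `⟨P, Q⟩ ⊴ G`. -/
theorem PQ_normal_in_ApAqAr (p q r : ℕ) (hp : p.Prime) (hq : q.Prime) (hr : r.Prime)
    (hpq : p ≠ q) (hpr : p ≠ r) (hqr : q ≠ r)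
    (G : Type*) [Group G] [Finite G] (hG : InApAqAr p q r G)
    (P Q R : Subgroup G) (hP : IsSylow' p P) (hPn : P.Normal)
    (hQ : IsSylow' q Q) (hR : IsSylow' r R) (hRQ : R ≤ Subgroup.normalizer (Q : Set G)) :
    (P ⊔ Q).Normal :=
  PQ_normal_in_ApAqAr_general p q r G hG P Q R hP hPn hQ hR hRQ
end

section
/- Let p, q and r be distinct primes and let G be a finite group lying in 𝔄_p𝔄_q𝔄_r. Then there exists a subgroup G₀ of G such that the center of G₀ is trivial, G₀ ∩ Z(G) is trivial, the subgroup generated by G₀ and Z(G) is all of G (so that G is the internal direct product of G₀ and Z(G), and in particular G is isomorphic to G₀ × Z(G)), and G₀ lies in 𝔄_p𝔄_q𝔄_r. Moreover any such subgroup G₀ is isomorphic to the quotient group G/Z(G), so G₀ is unique up to isomorphism. -/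
/-!
The centre `Z` of `G` has exponent dividing `p * q * r`. For each `ℓ ∈ {p, q, r}` we build a
homomorphism `f_ℓ : G →* Z` with values of order dividing `ℓ` which restricts to `z ↦ z ^ s_ℓ`,
`s_ℓ ≡ 1 [MOD ℓ]`, on `Z`; then `f_p * f_q * f_r` is a retraction of `G` onto `Z`, and its kernel
is a complement of `Z` with trivial centre. The layers `1 ≤ N ≤ M ≤ G` with `N`, `M / N`, `G / M`
elementary abelian of exponents `p`, `q`, `r` provide the `f_ℓ`: if `H / K` is such a layer, of
index prime to `ℓ`, the transfer `G → H / K` is `z ↦ z ^ [G : H]` on `Z`, and since `H / K` is an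
`𝔽_ℓ`-vector space, a suitable power map on the central part of `H` extends from its image in
`H / K` to all of `H / K`. Any complement of `Z` is isomorphic to `G / Z`.
-/

open Subgroup

lemma Subgroup.exists_retraction_of_pow_eq_one {ℓ : ℕ} (hℓ : ℓ.Prime) {Q : Type*} [CommGroup Q]
    (hQ : ∀ x : Q, x ^ ℓ = 1) (B : Subgroup Q) : ∃ ρ : Q →* B, ∀ b : B, ρ b = b := by
  have : Fact ℓ.Prime := ⟨hℓ⟩
  have hQ' : ∀ x : Additive Q, ℓ • x = 0 := fun x => hQ x.toMul
  let _ : Module (ZMod ℓ) (Additive Q) := AddCommGroup.zmodModule (n := ℓ) hQ'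
  obtain ⟨C, hC⟩ :=
    (AddSubgroup.toZModSubmodule ℓ (M := Additive Q) B.toAddSubgroup).exists_isCompl
  let g := Submodule.projectionOnto _ C hC
  refine ⟨MonoidHom.mk' (fun x => ⟨(g (.ofMul x)).1.toMul, (g _).2⟩) fun x y => ?_, fun b => ?_⟩
  · ext
    exact congrArg (fun v => v.1.toMul) (map_add g (.ofMul x) (.ofMul y))
  · ext
    exact congrArg (fun v => v.1.toMul) (Submodule.projectionOnto_apply_left hC ⟨.ofMul b, b.2⟩)

lemma MonoidHom.exists_comp_eq_of_ker_le {ℓ : ℕ} (hℓ : ℓ.Prime) {D Q C : Type*} [Group D]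
    [CommGroup Q] [Group C] (hQ : ∀ x : Q, x ^ ℓ = 1) (j : D →* Q) (ψ : D →* C)
    (h : j.ker ≤ ψ.ker) : ∃ φ : Q →* C, φ.comp j = ψ := by
  obtain ⟨ρ, hρ⟩ := j.range.exists_retraction_of_pow_eq_one hℓ hQ
  refine ⟨((QuotientGroup.lift j.ker ψ h).comp
    (QuotientGroup.quotientKerEquivRange j).symm.toMonoidHom).comp ρ, ?_⟩
  ext d
  have : (QuotientGroup.quotientKerEquivRange j).symm ⟨j d, d, rfl⟩ = d := by
    rw [MulEquiv.symm_apply_eq]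
    rfl
  simp [hρ ⟨j d, d, rfl⟩, this]

lemma pow_pow_eq_pow_of_mod_eq_one {M : Type*} [Monoid M] {z : M} {n k e : ℕ}
    (h : (z ^ n) ^ k = 1) (he : e % k = 1) : (z ^ e) ^ n = z ^ n := by
  rw [← pow_mul, mul_comm, pow_mul, pow_eq_pow_mod e h, he, pow_one]

lemma pow_mul_pow_mul_pow_eq_self {A : Type*} [CommGroup A] {p q r a b c : ℕ}
    (hpq : p.Coprime q) (hpr : p.Coprime r) (hqr : q.Coprime r) {z : A}
    (hz : z ^ (p * q * r) = 1) (ha : (z ^ a) ^ p = 1) (hb : (z ^ b) ^ q = 1)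
    (hc : (z ^ c) ^ r = 1) (ha1 : a % p = 1) (hb1 : b % q = 1) (hc1 : c % r = 1) :
    z ^ a * z ^ b * z ^ c = z := by
  rw [← mul_inv_eq_one]
  set x := z ^ a * z ^ b * z ^ c * z⁻¹
  -- `x` is killed by `q * r`, `p * r` and `p * q`, whose gcd is `1`
  have hx₁ : x ^ (q * r) = 1 := by
    have hpa : (z ^ a) ^ (q * r) = z ^ (q * r) :=
      pow_pow_eq_pow_of_mod_eq_one (by rw [← pow_mul, ← hz, mul_comm, mul_assoc]) ha1
    rw [mul_pow, mul_pow, mul_pow, hpa, pow_mul (z ^ b), hb, pow_mul' (z ^ c), hc]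
    simp
  have hx₂ : x ^ (p * r) = 1 := by
    have hqb : (z ^ b) ^ (p * r) = z ^ (p * r) :=
      pow_pow_eq_pow_of_mod_eq_one (by rw [← pow_mul, ← hz, mul_right_comm]) hb1
    rw [mul_pow, mul_pow, mul_pow, hqb, pow_mul (z ^ a), ha, pow_mul' (z ^ c), hc]
    simp
  have hx₃ : x ^ (p * q) = 1 := by
    have hrc : (z ^ c) ^ (p * q) = z ^ (p * q) :=
      pow_pow_eq_pow_of_mod_eq_one (by rw [← pow_mul, hz]) hc1
    rw [mul_pow, mul_pow, mul_pow, hrc, pow_mul (z ^ a), ha, pow_mul' (z ^ b), hb]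
    simp
  have hgcd : ((q * r).gcd (p * r)).gcd (p * q) = 1 := by
    rw [Nat.gcd_mul_right, hpq.symm.gcd_eq_one, one_mul]
    exact (Nat.Coprime.mul_right hpr.symm hqr.symm).gcd_eq_one
  simpa [hgcd] using pow_gcd_eq_one.mpr ⟨pow_gcd_eq_one.mpr ⟨hx₁, hx₂⟩, hx₃⟩

section

variable {G : Type*} [Group G]

lemma conj_pow_eq_of_mem_center {z : G} (hz : z ∈ center G) (k : ℕ) (g : G) :
    g⁻¹ * z ^ k * g = z ^ k := by
  rw [mul_assoc, ← mem_center_iff.mp (pow_mem hz k) g, inv_mul_cancel_left]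

lemma Subgroup.pow_index_mem_of_mem_center (H : Subgroup G) {z : G} (hz : z ∈ center G) :
    z ^ H.index ∈ H :=
  MonoidHom.transfer_eq_pow_aux z fun k g _ => conj_pow_eq_of_mem_center hz k g

lemma MonoidHom.transfer_eq_pow_of_mem_center {A : Type*} [CommGroup A] {H : Subgroup G}
    [H.FiniteIndex] (ϕ : H →* A) {z : G} (hz : z ∈ center G) :
    ϕ.transfer z = ϕ ⟨z ^ H.index, H.pow_index_mem_of_mem_center hz⟩ :=
  ϕ.transfer_eq_pow z fun k g _ => conj_pow_eq_of_mem_center hz k g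

lemma Subgroup.index_coprime_of_pow_mem_s4 [Finite G] {H : Subgroup G} [H.Normal] {ℓ n : ℕ}
    (hℓ : ℓ.Prime) (hn : ℓ.Coprime n) (h : ∀ g : G, g ^ n ∈ H) : H.index.Coprime ℓ := by
  have : Fact ℓ.Prime := ⟨hℓ⟩
  rw [Nat.coprime_comm, hℓ.coprime_iff_not_dvd, index_eq_card]
  intro hdvd
  obtain ⟨x, hx⟩ := exists_prime_orderOf_dvd_card' ℓ hdvd
  have hxn : x ^ n = 1 := by
    induction x using QuotientGroup.induction_on with | H g =>
    exact (QuotientGroup.eq_one_iff _).mpr (h g)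
  exact (hℓ.coprime_iff_not_dvd.mp hn) (hx ▸ orderOf_dvd_of_pow_eq_one hxn)

/-- `H ⧸ (H ⊓ K)` is abelian of exponent dividing `ℓ`. -/
structure IsElemAbelianSection (ℓ : ℕ) (H K : Subgroup G) : Prop where
  commutator_mem : ∀ x ∈ H, ∀ y ∈ H, x * y * x⁻¹ * y⁻¹ ∈ K
  pow_mem : ∀ x ∈ H, x ^ ℓ ∈ K

namespace IsElemAbelianSection

variable {ℓ : ℕ} {H K : Subgroup G}

lemma normal_subgroupOf (h : IsElemAbelianSection ℓ H K) : (K.subgroupOf H).Normal where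
  conj_mem n hn g := by
    simpa [mem_subgroupOf] using K.mul_mem (h.commutator_mem g g.2 n n.2) hn

lemma mul_comm_quotient (h : IsElemAbelianSection ℓ H K) [(K.subgroupOf H).Normal]
    (a b : H ⧸ K.subgroupOf H) : a * b = b * a := by
  induction a using QuotientGroup.induction_on with | H x =>
  induction b using QuotientGroup.induction_on with | H y =>
  rw [← QuotientGroup.mk_mul, ← QuotientGroup.mk_mul, QuotientGroup.eq]
  simpa [mem_subgroupOf, mul_assoc] using h.commutator_mem y⁻¹ (inv_mem y.2) x⁻¹ (inv_mem x.2)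

lemma pow_eq_one_quotient (h : IsElemAbelianSection ℓ H K) [(K.subgroupOf H).Normal]
    (a : H ⧸ K.subgroupOf H) : a ^ ℓ = 1 := by
  induction a using QuotientGroup.induction_on with | H x =>
  rw [← QuotientGroup.mk_pow, QuotientGroup.eq_one_iff]
  exact h.pow_mem x x.2

open scoped IsMulCommutative in
lemma exists_centerHom_eq_pow [Finite G] {m : ℕ} (hℓ : ℓ.Prime) (hℓm : ℓ.Coprime m)
    (h : IsElemAbelianSection ℓ H K) (hK : ∀ k ∈ K, k ^ m = 1) (hindex : H.index.Coprime ℓ) :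
    ∃ (f : G →* center G) (s : ℕ), s % ℓ = 1 ∧ (∀ g, f g ^ ℓ = 1) ∧
      ∀ z : center G, f z = z ^ s := by
  have := h.normal_subgroupOf
  let _ : CommGroup (H ⧸ K.subgroupOf H) := { mul_comm := h.mul_comm_quotient }
  -- `u ↦ u ^ (m * d)` kills `K`, so it factors through `H ⧸ (H ⊓ K)`, and `d` is chosen so that
  -- its composite with the transfer, `z ↦ z ^ ([G : H] * m * d)` on the centre, is `≡ 1 [MOD ℓ]`
  obtain ⟨d, -, hd⟩ := Nat.exists_mul_mod_eq_one_of_coprime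
    (Nat.Coprime.mul_left hindex hℓm.symm) hℓ.one_lt
  let j : ↥(center G ⊓ H) →* H ⧸ K.subgroupOf H :=
    (QuotientGroup.mk' _).comp (inclusion inf_le_right)
  let ψ : ↥(center G ⊓ H) →* center G := (powMonoidHom (m * d)).comp (inclusion inf_le_left)
  obtain ⟨φ, hφ⟩ := j.exists_comp_eq_of_ker_le hℓ h.pow_eq_one_quotient ψ fun u hu => by
    have hu : (u : G) ∈ K :=
      (QuotientGroup.eq_one_iff (N := K.subgroupOf H) (inclusion inf_le_right u)).mp hu
    ext
    simp [ψ, pow_mul, hK _ hu]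
  refine ⟨φ.comp (QuotientGroup.mk' (K.subgroupOf H)).transfer, H.index * (m * d), ?_,
    fun g => by rw [MonoidHom.comp_apply, ← map_pow, h.pow_eq_one_quotient, map_one], fun z => ?_⟩
  · rw [← mul_assoc]
    exact hd
  · have hz : (z : G) ^ H.index ∈ center G ⊓ H :=
      ⟨(center G).pow_mem z.2 _, H.pow_index_mem_of_mem_center z.2⟩
    rw [MonoidHom.comp_apply, MonoidHom.transfer_eq_pow_of_mem_center _ z.2]
    refine (DFunLike.congr_fun hφ ⟨_, hz⟩).trans (Subtype.ext ?_)
    simp [ψ, pow_mul]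

end IsElemAbelianSection

lemma ElemAbelian.commutator_eq_one {p : ℕ} {H : Type*} [Group H] (h : ElemAbelian p H)
    (x y : H) : x * y * x⁻¹ * y⁻¹ = 1 := by
  rw [mul_inv_eq_one, mul_inv_eq_iff_eq_mul, h.1]

lemma ElemAbelian.comap {H : Type*} [Group H] {f : G →* H} (hf : Function.Injective f) {p : ℕ}
    {K : Subgroup H} (h : ElemAbelian p K) : ElemAbelian p (K.comap f) :=
  ⟨fun a b => Subtype.ext <| hf <| by simpa using congrArg Subtype.val (h.1 ⟨f a, a.2⟩ ⟨f b, b.2⟩),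
    fun a => Subtype.ext <| hf <| by simpa using congrArg Subtype.val (h.2 ⟨f a, a.2⟩)⟩

lemma InApAq.of_injective {H : Type*} [Group H] {f : G →* H} (hf : Function.Injective f)
    {q r : ℕ} (h : InApAq q r H) : InApAq q r G := by
  obtain ⟨K, hK, hKq, hcomm, hpow⟩ := h
  exact ⟨K.comap f, hK.comap f, hKq.comap hf, fun a b => by simpa using hcomm (f a) (f b),
    fun a => by simpa using hpow (f a)⟩

lemma InApAqAr.subgroup {p q r : ℕ} (hG : InApAqAr p q r G) (H : Subgroup G) :
    InApAqAr p q r H := by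
  obtain ⟨N, hN, hNp, hNqr⟩ := hG
  refine ⟨N.subgroupOf H, hN.subgroupOf H, hNp.comap Subtype.val_injective, hNqr.of_injective
    (f := QuotientGroup.map _ _ H.subtype le_rfl) ?_⟩
  rw [← MonoidHom.ker_eq_bot_iff, QuotientGroup.ker_map]
  exact QuotientGroup.map_mk'_self _

lemma InApAqAr.exists_elemAbelianSections {p q r : ℕ} (hG : InApAqAr p q r G) :
    ∃ N M : Subgroup G, N.Normal ∧ M.Normal ∧ IsElemAbelianSection p N ⊥ ∧
      IsElemAbelianSection q M N ∧ IsElemAbelianSection r ⊤ M := by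
  obtain ⟨N, hN, hNp, K, hK, hKq, hcomm, hpow⟩ := hG
  refine ⟨N, K.comap (QuotientGroup.mk' N), hN, hK.comap _, ⟨fun x hx y hy => ?_, fun x hx => ?_⟩,
    ⟨fun x hx y hy => ?_, fun x hx => ?_⟩, ⟨fun x _ y _ => ?_, fun x _ => ?_⟩⟩
  · exact congrArg Subtype.val (hNp.commutator_eq_one ⟨x, hx⟩ ⟨y, hy⟩)
  · exact congrArg Subtype.val (hNp.2 ⟨x, hx⟩)
  · rw [← QuotientGroup.eq_one_iff]
    simpa using congrArg Subtype.val (hKq.commutator_eq_one ⟨_, hx⟩ ⟨_, hy⟩)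
  · rw [← QuotientGroup.eq_one_iff]
    simpa using congrArg Subtype.val (hKq.2 ⟨_, hx⟩)
  · simpa using hcomm x y
  · simpa using hpow x

open scoped IsMulCommutative in
lemma InApAqAr.exists_retraction_center [Finite G] {p q r : ℕ} (hp : p.Prime) (hq : q.Prime)
    (hr : r.Prime) (hpq : p ≠ q) (hpr : p ≠ r) (hqr : q ≠ r) (hG : InApAqAr p q r G) :
    ∃ π : G →* center G, ∀ z : center G, π z = z := by
  have cpq := (Nat.coprime_primes hp hq).mpr hpq
  have cpr := (Nat.coprime_primes hp hr).mpr hpr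
  have cqr := (Nat.coprime_primes hq hr).mpr hqr
  obtain ⟨N, M, _, _, hN, hM, hG⟩ := hG.exists_elemAbelianSections
  have hNexp : ∀ x ∈ N, x ^ p = 1 := fun x hx => mem_bot.mp (hN.pow_mem x hx)
  have hMexp : ∀ x ∈ M, x ^ (p * q) = 1 := fun x hx => by
    rw [pow_mul']
    exact hNexp _ (hM.pow_mem x hx)
  have hGexp : ∀ g : G, g ^ (p * q * r) = 1 := fun g => by
    rw [pow_mul']
    exact hMexp _ (hG.pow_mem g trivial)
  obtain ⟨fp, sp, hsp, hfp_pow, hfp⟩ := hN.exists_centerHom_eq_pow hp (Nat.coprime_one_right p)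
    (fun k hk => by rw [mem_bot.mp hk, one_pow])
    (index_coprime_of_pow_mem_s4 hp (cpq.mul_right cpr) fun g => by
      rw [mul_comm, pow_mul]
      exact hM.pow_mem _ (hG.pow_mem g trivial))
  obtain ⟨fq, sq, hsq, hfq_pow, hfq⟩ := hM.exists_centerHom_eq_pow hq cpq.symm hNexp
    (index_coprime_of_pow_mem_s4 hq cqr fun g => hG.pow_mem g trivial)
  obtain ⟨fr, sr, hsr, hfr_pow, hfr⟩ := hG.exists_centerHom_eq_pow hr (cpr.mul_left cqr).symm hMexp
    (by rw [index_top]; exact Nat.coprime_one_left r)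
  refine ⟨fp * fq * fr, fun z => ?_⟩
  rw [MonoidHom.mul_apply, MonoidHom.mul_apply, hfp, hfq, hfr]
  refine pow_mul_pow_mul_pow_eq_self cpq cpr cqr (Subtype.ext (hGexp z)) ?_ ?_ ?_ hsp hsq hsr
  · rw [← hfp]
    exact hfp_pow z
  · rw [← hfq]
    exact hfq_pow z
  · rw [← hfr]
    exact hfr_pow z

lemma Subgroup.isComplement'_ker_of_retraction {K : Subgroup G} (π : G →* K)
    (hπ : ∀ k : K, π k = k) : IsComplement' π.ker K := by
  refine isComplement'_of_disjoint_and_mul_eq_univ ?_ (Set.eq_univ_of_forall fun g => ?_)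
  · rw [disjoint_iff_inf_le]
    rintro x ⟨hx, hxK⟩
    exact congrArg Subtype.val ((hπ ⟨x, hxK⟩).symm.trans hx)
  · exact ⟨g * (π g : G)⁻¹, by simp [hπ], π g, (π g).2, inv_mul_cancel_right _ _⟩

lemma Subgroup.isComplement'_of_isCompl {H K : Subgroup G} [K.Normal] (h : IsCompl H K) :
    IsComplement' H K :=
  isComplement'_of_disjoint_and_mul_eq_univ h.disjoint
    (by rw [← mul_normal, h.sup_eq_top, coe_top])

noncomputable def Subgroup.IsComplement'.prodMulEquiv {H K : Subgroup G} (h : IsComplement' H K)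
    (hc : ∀ (x : H) (y : K), Commute (x : G) y) : H × K ≃* G :=
  MulEquiv.ofBijective (H.subtype.noncommCoprod K.subtype hc) h

lemma Subgroup.IsComplement'.center_eq_bot {H : Subgroup G} (h : IsComplement' H (center G)) :
    center H = ⊥ := by
  refine eq_bot_iff.mpr fun x hx => ?_
  have hxZ : (x : G) ∈ center G := mem_center_iff.mpr fun g => by
    obtain ⟨⟨a, z⟩, rfl⟩ := h.2 g
    have hax : (a : G) * x = x * a := congrArg Subtype.val (mem_center_iff.mp hx a)
    dsimp only
    rw [mul_assoc, ← mem_center_iff.mp z.2, ← mul_assoc, hax, mul_assoc]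
  exact Subtype.ext (h.disjoint.le_bot ⟨x.2, hxZ⟩)

end

/-- A finite group `G ∈ 𝔄_p𝔄_q𝔄_r` is the internal direct product of a
subgroup `G₀` with trivial centre (itself in `𝔄_p𝔄_q𝔄_r`) and the centre `Z(G)`; in
particular `G ≅ G₀ × Z(G)`.  Moreover any such `G₀` is isomorphic to `G/Z(G)`, hence is
unique up to isomorphism. -/
theorem centre_splits_in_ApAqAr (p q r : ℕ) (hp : p.Prime) (hq : q.Prime) (hr : r.Prime)
    (hpq : p ≠ q) (hpr : p ≠ r) (hqr : q ≠ r)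
    (G : Type*) [Group G] [Finite G] (hG : InApAqAr p q r G) :
    (∃ G₀ : Subgroup G,
        Subgroup.center G₀ = ⊥ ∧
        G₀ ⊓ Subgroup.center G = ⊥ ∧
        G₀ ⊔ Subgroup.center G = ⊤ ∧
        InApAqAr p q r G₀ ∧
        Nonempty (G ≃* G₀ × Subgroup.center G)) ∧
    ∀ G₀ : Subgroup G,
        Subgroup.center G₀ = ⊥ →
        G₀ ⊓ Subgroup.center G = ⊥ →
        G₀ ⊔ Subgroup.center G = ⊤ →
        InApAqAr p q r G₀ →
        Nonempty (G₀ ≃* G ⧸ Subgroup.center G) := by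
  obtain ⟨π, hπ⟩ := hG.exists_retraction_center hp hq hr hpq hpr hqr
  have hcompl := isComplement'_ker_of_retraction π hπ
  refine ⟨⟨π.ker, hcompl.center_eq_bot, hcompl.isCompl.inf_eq_bot, hcompl.sup_eq_top,
    hG.subgroup _, ⟨(hcompl.prodMulEquiv fun x z => mem_center_iff.mp z.2 x).symm⟩⟩,
    fun G₀ _ hinf hsup _ => ?_⟩
  have hcompl₀ : G₀.IsComplement' (center G) :=
    isComplement'_of_isCompl ⟨disjoint_iff.mpr hinf, codisjoint_iff.mpr hsup⟩
  exact ⟨hcompl₀.QuotientMulEquiv.symm⟩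
end

section
/- Let p, q and r be distinct primes and let G be a finite group lying in 𝔄_p𝔄_q𝔄_r with trivial center. Let P be a normal Sylow p-subgroup of G, and let Q be a Sylow q-subgroup of G that is normalized by some Sylow r-subgroup R of G. Let P₁ = { x ∈ P : h·x·h⁻¹ = x for all h ∈ Q } (the centralizer of Q in P). Then: P₁ is a normal subgroup of G; there exists a subgroup P₂ of P that is normalized by both Q and R such that P₁ ∩ P₂ is trivial and P₁ and P₂ generate P; no nontrivial element of P₁ is centralized by all of R; and no nontrivial element of P₂ is centralized by all of Q. -/
/-!
The normal Sylow subgroup `P` is the bottom factor of the variety decomposition, so it is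
elementary abelian, and `G = P ⊔ Q ⊔ R` because the exponent of `G` divides `pqr`.
Since `|Q|` is prime to the exponent of `P`, the norm `x ↦ ∏_{h ∈ Q} h x h⁻¹` of the
conjugation action splits `P` into its fixed points `C_P(Q)` and the kernel of the norm, and
both factors are normalised by everything that normalises `Q`. A fixed point of `R` in `C_P(Q)`
commutes with `P`, `Q` and `R`, hence is central.
-/

open scoped IsMulCommutative

namespace Subgroup

variable {G : Type*} [Group G]

theorem mem_centralizer_iff_forall_conj_eq {s : Set G} {x : G} :
    x ∈ centralizer s ↔ ∀ h ∈ s, h * x * h⁻¹ = x := by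
  simp only [mem_centralizer_iff, mul_inv_eq_iff_eq_mul]

theorem mem_centralizer_sup {H K : Subgroup G} {x : G} (hH : x ∈ centralizer H)
    (hK : x ∈ centralizer K) : x ∈ centralizer (H ⊔ K : Subgroup G) := by
  rw [← zpowers_le, le_centralizer_iff] at hH hK ⊢
  exact sup_le hH hK

theorem mem_of_pow_mem_of_coprime {N : Subgroup G} [N.Normal] {x : G} {a b : ℕ}
    (hab : a.Coprime b) (ha : x ^ a ∈ N) (hb : x ^ b ∈ N) : x ∈ N := by
  rw [← QuotientGroup.eq_one_iff, QuotientGroup.mk_pow] at ha hb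
  exact (QuotientGroup.eq_one_iff x).1 ((pow_eq_one_iff_of_coprime hab).1 ⟨ha, hb⟩)

theorem eq_top_of_coprime_index [Finite G] {H : Subgroup G} {n : ℕ} (hG : ∀ g : G, g ^ n = 1)
    (hH : H.index.Coprime n) : H = ⊤ := by
  rw [← index_eq_one]
  by_contra hne
  obtain ⟨s, hs, hsH⟩ := Nat.exists_prime_and_dvd hne
  have := Fact.mk hs
  obtain ⟨g, hg⟩ := exists_prime_orderOf_dvd_card' s (hsH.trans H.index_dvd_card)
  exact (Nat.Prime.coprime_iff_not_dvd hs).1 (hH.coprime_dvd_left hsH)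
    (hg ▸ orderOf_dvd_of_pow_eq_one (hG g))

theorem sup_normalizer_le_normalizer_inf_centralizer (A Q : Subgroup G) [A.Normal]
    [IsMulCommutative A] :
    A ⊔ normalizer (Q : Set G) ≤ normalizer ((A ⊓ centralizer Q : Subgroup G) : Set G) :=
  sup_le
    ((le_centralizer A).trans ((centralizer_le inf_le_left).trans (centralizer_le_normalizer _)))
    ((le_inf le_normalizer_of_normal
      (le_normalizer_of_normal_subgroupOf (centralizer_le_normalizer _))).trans
      inf_normalizer_le_normalizer_inf)

section ConjNorm

variable (A Q : Subgroup G) [A.Normal] [IsMulCommutative A] [Finite Q]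

noncomputable def conjNorm : A →* A :=
  haveI := Fintype.ofFinite Q
  ∏ h : Q, (MulAut.conjNormal (h : G)).toMonoidHom

variable {A Q}

theorem conjNorm_conj_of_mem_normalizer {k : G} (hk : k ∈ normalizer (Q : Set G)) (x : A) :
    conjNorm A Q (MulAut.conjNormal k x) = MulAut.conjNormal k (conjNorm A Q x) := by
  let := Fintype.ofFinite Q
  simp only [conjNorm, MonoidHom.finsetProd_apply, MulEquiv.coe_toMonoidHom, map_prod]
  symm
  refine Fintype.prod_equiv (Q.normalizerMonoidHom ⟨k, hk⟩).toEquiv _ _ fun h => Subtype.ext ?_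
  simp only [MulEquiv.toEquiv_eq_coe, MulEquiv.coe_toEquiv, MulAut.conjNormal_apply,
    normalizerMonoidHom_apply_apply_coe]
  group

theorem conjNorm_conj_of_mem {k : G} (hk : k ∈ Q) (x : A) :
    conjNorm A Q (MulAut.conjNormal k x) = conjNorm A Q x := by
  let := Fintype.ofFinite Q
  simp only [conjNorm, MonoidHom.finsetProd_apply, MulEquiv.coe_toMonoidHom]
  refine Fintype.prod_equiv (Equiv.mulRight ⟨k, hk⟩) _ _ fun h => Subtype.ext ?_
  simp only [Equiv.coe_mulRight, MulAut.conjNormal_apply, coe_mul]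
  group

theorem conjNorm_mem_centralizer (x : A) : (conjNorm A Q x : G) ∈ centralizer Q := by
  refine mem_centralizer_iff_forall_conj_eq.2 fun k hk => ?_
  have h := conjNorm_conj_of_mem_normalizer (le_normalizer hk) x
  rw [conjNorm_conj_of_mem hk] at h
  rw [← MulAut.conjNormal_apply, ← h]

theorem conjNorm_eq_pow_of_mem_centralizer {x : A} (hx : (x : G) ∈ centralizer Q) :
    conjNorm A Q x = x ^ Nat.card Q := by
  let := Fintype.ofFinite Q
  rw [mem_centralizer_iff_forall_conj_eq] at hx
  simp only [conjNorm, MonoidHom.finsetProd_apply, MulEquiv.coe_toMonoidHom]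
  rw [Finset.prod_congr rfl fun (h : Q) _ => Subtype.ext ((MulAut.conjNormal_apply _ _).trans
    (hx h h.2)), Finset.prod_const, Finset.card_univ, Fintype.card_eq_nat_card]

theorem normalizer_le_normalizer_map_ker_conjNorm :
    normalizer (Q : Set G) ≤
      normalizer (((conjNorm A Q).ker.map A.subtype : Subgroup G) : Set G) := by
  rw [le_normalizer_iff]
  rintro k hk _ ⟨y, hy, rfl⟩
  refine ⟨MulAut.conjNormal k y, ?_, MulAut.conjNormal_apply k y⟩
  rw [SetLike.mem_coe, MonoidHom.mem_ker] at hy ⊢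
  rw [conjNorm_conj_of_mem_normalizer hk, hy, map_one]

variable (hQA : (Nat.card Q).Coprime (Monoid.exponent A))
include hQA

theorem inf_centralizer_inf_map_ker_conjNorm_eq_bot :
    A ⊓ centralizer Q ⊓ (conjNorm A Q).ker.map A.subtype = ⊥ := by
  refine eq_bot_iff.2 fun x hx => ?_
  obtain ⟨⟨-, hxQ⟩, y, hy, rfl⟩ := hx
  have hyQ : y ^ Nat.card Q = 1 := (conjNorm_eq_pow_of_mem_centralizer hxQ).symm.trans hy
  rw [(pow_eq_one_iff_of_coprime hQA).1 ⟨hyQ, Monoid.pow_exponent_eq_one y⟩]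
  exact one_mem _

theorem inf_centralizer_sup_map_ker_conjNorm_eq :
    A ⊓ centralizer Q ⊔ (conjNorm A Q).ker.map A.subtype = A := by
  refine le_antisymm (sup_le inf_le_left (map_subtype_le _)) fun x hx => ?_
  set y : A := ⟨x, hx⟩
  set n := Nat.card Q
  obtain ⟨e, he⟩ := exists_pow_eq_self_of_coprime
    (hQA.coprime_dvd_right (Monoid.order_dvd_exponent y))
  have hfix : (conjNorm A Q y : G) ∈ A ⊓ centralizer Q :=
    ⟨(conjNorm A Q y).2, conjNorm_mem_centralizer y⟩
  have hker : y ^ n * (conjNorm A Q y)⁻¹ ∈ (conjNorm A Q).ker := by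
    rw [MonoidHom.mem_ker, map_mul, map_inv, map_pow,
      conjNorm_eq_pow_of_mem_centralizer (conjNorm_mem_centralizer y), mul_inv_cancel]
  have hy : y = conjNorm A Q y ^ e * (y ^ n * (conjNorm A Q y)⁻¹) ^ e := by
    rw [← mul_pow, mul_inv_cancel_comm_assoc, he]
  rw [show x = y from rfl, hy, coe_mul, coe_pow, coe_pow]
  exact mul_mem (mem_sup_left (pow_mem hfix e))
    (mem_sup_right (pow_mem (mem_map_of_mem _ hker) e))

end ConjNorm

end Subgroup

theorem InApAq.pow_eq_one_s7 {q r : ℕ} {H : Type*} [Group H] (hH : InApAq q r H) (a : H) :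
    a ^ (q * r) = 1 := by
  obtain ⟨K, -, ⟨-, hK⟩, -, hKr⟩ := hH
  rw [pow_mul']
  exact congrArg Subtype.val (hK ⟨_, hKr a⟩)

theorem InApAqAr.exists_normal_elemAbelian_pow_mem {p q r : ℕ} {G : Type*} [Group G]
    (hG : InApAqAr p q r G) :
    ∃ N : Subgroup G, N.Normal ∧ ElemAbelian p N ∧ ∀ g : G, g ^ (q * r) ∈ N := by
  obtain ⟨N, hN, hNp, hGN⟩ := hG
  exact ⟨N, hN, hNp, fun g => (QuotientGroup.eq_one_iff _).1 (hGN.pow_eq_one_s7 (g : G ⧸ N))⟩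

theorem IsSylow'.eq_of_normal {p m : ℕ} {G : Type*} [Group G] {P N : Subgroup G}
    (hP : IsSylow' p P) [P.Normal] [N.Normal] (hN : ∀ x : N, x ^ p = 1)
    (hGN : ∀ g : G, g ^ m ∈ N) (hpm : p.Coprime m) : N = P := by
  refine le_antisymm (fun x hx => ?_) (fun x hx => ?_)
  · have hxp : x ^ p = 1 := congrArg Subtype.val (hN ⟨x, hx⟩)
    exact Subgroup.mem_of_pow_mem_of_coprime hP.2.symm (hxp ▸ P.one_mem) (P.pow_index_mem x)
  · obtain ⟨k, hk⟩ := hP.1 ⟨x, hx⟩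
    have hxp : x ^ p ^ k = 1 := congrArg Subtype.val hk
    exact Subgroup.mem_of_pow_mem_of_coprime (hpm.pow_left k) (hxp ▸ N.one_mem) (hGN x)

theorem IsPGroup.coprime_card_exponent {p q : ℕ} {Q A : Type*} [Group Q] [Finite Q] [Group A]
    (hp : p.Prime) (hq : q.Prime) (hpq : p ≠ q) (hQ : IsPGroup q Q) (hA : ∀ x : A, x ^ p = 1) :
    (Nat.card Q).Coprime (Monoid.exponent A) := by
  have := Fact.mk hq
  obtain ⟨k, hk⟩ := IsPGroup.iff_card.1 hQ
  rw [hk]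
  exact (((Nat.coprime_primes hq hp).2 hpq.symm).pow_left k).coprime_dvd_right
    (Monoid.exponent_dvd_of_forall_pow_eq_one hA)

theorem IsSylow'.sup_sup_eq_top {p q r : ℕ} {G : Type*} [Group G] [Finite G]
    {P Q R : Subgroup G} (hP : IsSylow' p P) (hQ : IsSylow' q Q) (hR : IsSylow' r R)
    (hG : ∀ g : G, g ^ (p * (q * r)) = 1) : P ⊔ Q ⊔ R = ⊤ := by
  have hsup {H : Subgroup G} (hH : H ≤ P ⊔ Q ⊔ R) {s : ℕ} (hs : H.index.Coprime s) :
      (P ⊔ Q ⊔ R).index.Coprime s :=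
    hs.coprime_dvd_left (Subgroup.index_dvd_of_le hH)
  exact Subgroup.eq_top_of_coprime_index hG <|
    (hsup (le_sup_left.trans le_sup_left) hP.2).mul_right
      ((hsup (le_sup_right.trans le_sup_left) hQ.2).mul_right (hsup le_sup_right hR.2))

open Subgroup

theorem fixed_point_decomposition_in_ApAqAr_general (p q r : ℕ) (hp : p.Prime) (hq : q.Prime)
    (hr : r.Prime) (hpq : p ≠ q) (hpr : p ≠ r)
    (G : Type*) [Group G] [Finite G] (hG : InApAqAr p q r G)
    (hZ : Subgroup.center G = ⊥)
    (P Q R : Subgroup G) (hP : IsSylow' p P) (hPn : P.Normal)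
    (hQ : IsSylow' q Q) (hR : IsSylow' r R) (hRQ : R ≤ Subgroup.normalizer (Q : Set G)) :
    ∃ P₁ : Subgroup G,
      (P₁ : Set G) = {x | x ∈ P ∧ ∀ h ∈ Q, h * x * h⁻¹ = x} ∧
      P₁.Normal ∧
      (∀ x ∈ P₁, (∀ h ∈ R, h * x * h⁻¹ = x) → x = 1) ∧
      ∃ P₂ : Subgroup G, P₂ ≤ P ∧ Q ≤ Subgroup.normalizer (P₂ : Set G) ∧ R ≤ Subgroup.normalizer (P₂ : Set G) ∧
        P₁ ⊓ P₂ = ⊥ ∧ P₁ ⊔ P₂ = P ∧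
        ∀ x ∈ P₂, (∀ h ∈ Q, h * x * h⁻¹ = x) → x = 1 := by
  have hp_coprime {s : ℕ} (hs : s.Prime) (hps : p ≠ s) : p.Coprime s :=
    (Nat.coprime_primes hp hs).2 hps
  obtain ⟨N, hN, ⟨hNab, hNp⟩, hGN⟩ := hG.exists_normal_elemAbelian_pow_mem
  obtain rfl : P = N :=
    (hP.eq_of_normal hNp hGN ((hp_coprime hq hpq).mul_right (hp_coprime hr hpr))).symm
  have : IsMulCommutative P := ⟨⟨hNab⟩⟩
  have htop : P ⊔ Q ⊔ R = ⊤ := hP.sup_sup_eq_top hQ hR fun g => by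
    rw [pow_mul']
    exact congrArg Subtype.val (hNp ⟨_, hGN g⟩)
  have hQP := hQ.1.coprime_card_exponent hp hq hpq hNp
  refine ⟨P ⊓ centralizer Q, ?_, ?_, ?_, (conjNorm P Q).ker.map P.subtype, map_subtype_le _,
    le_normalizer.trans normalizer_le_normalizer_map_ker_conjNorm,
    hRQ.trans normalizer_le_normalizer_map_ker_conjNorm,
    inf_centralizer_inf_map_ker_conjNorm_eq_bot hQP,
    inf_centralizer_sup_map_ker_conjNorm_eq hQP, ?_⟩
  · ext x
    simp [mem_centralizer_iff_forall_conj_eq]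
  · rw [← normalizer_eq_top_iff, eq_top_iff, ← htop]
    exact (sup_le (sup_le_sup_left le_normalizer P) (hRQ.trans le_sup_right)).trans
      (sup_normalizer_le_normalizer_inf_centralizer P Q)
  · rintro x ⟨hxP, hxQ⟩ hxR
    have hx : x ∈ centralizer (P ⊔ Q ⊔ R : Subgroup G) := mem_centralizer_sup
      (mem_centralizer_sup (le_centralizer P hxP) hxQ) (mem_centralizer_iff_forall_conj_eq.2 hxR)
    rwa [htop, coe_top, centralizer_univ, hZ] at hx
  · intro x hx hxQ
    have hx' : x ∈ P ⊓ centralizer Q ⊓ (conjNorm P Q).ker.map P.subtype :=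
      ⟨⟨map_subtype_le _ hx, mem_centralizer_iff_forall_conj_eq.2 hxQ⟩, hx⟩
    rwa [inf_centralizer_inf_map_ker_conjNorm_eq_bot hQP] at hx'

/-- Let `G ∈ 𝔄_p𝔄_q𝔄_r` be finite with trivial centre, `P` a normal Sylow
`p`-subgroup, `Q` a Sylow `q`-subgroup normalised by a Sylow `r`-subgroup `R`.  Setting
`P₁ = {x ∈ P : hxh⁻¹ = x ∀ h ∈ Q}`, the subgroup `P₁` is normal in `G`; no nontrivial
element of `P₁` is centralised by all of `R`; and there is a subgroup `P₂ ≤ P`, normalised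
by both `Q` and `R`, with `P₁ ⊓ P₂ = 1` and `⟨P₁, P₂⟩ = P`, such that no nontrivial element
of `P₂` is centralised by all of `Q`. -/
theorem fixed_point_decomposition_in_ApAqAr (p q r : ℕ) (hp : p.Prime) (hq : q.Prime)
    (hr : r.Prime) (hpq : p ≠ q) (hpr : p ≠ r) (hqr : q ≠ r)
    (G : Type*) [Group G] [Finite G] (hG : InApAqAr p q r G)
    (hZ : Subgroup.center G = ⊥)
    (P Q R : Subgroup G) (hP : IsSylow' p P) (hPn : P.Normal)
    (hQ : IsSylow' q Q) (hR : IsSylow' r R) (hRQ : R ≤ Subgroup.normalizer (Q : Set G)) :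
    ∃ P₁ : Subgroup G,
      (P₁ : Set G) = {x | x ∈ P ∧ ∀ h ∈ Q, h * x * h⁻¹ = x} ∧
      P₁.Normal ∧
      (∀ x ∈ P₁, (∀ h ∈ R, h * x * h⁻¹ = x) → x = 1) ∧
      ∃ P₂ : Subgroup G, P₂ ≤ P ∧ Q ≤ Subgroup.normalizer (P₂ : Set G) ∧ R ≤ Subgroup.normalizer (P₂ : Set G) ∧
        P₁ ⊓ P₂ = ⊥ ∧ P₁ ⊔ P₂ = P ∧
        ∀ x ∈ P₂, (∀ h ∈ Q, h * x * h⁻¹ = x) → x = 1 :=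
  fixed_point_decomposition_in_ApAqAr_general p q r hp hq hr hpq hpr G hG hZ P Q R hP hPn hQ hR hRQ
end

section
/- Let n be a squarefree natural number (i.e., n is not divisible by the square of any prime) and let G be a group of order n. Then G has a cyclic normal subgroup N such that the quotient G/N is cyclic. -/
/-- Hölder.  A group of squarefree order is metacyclic: it has a cyclic
normal subgroup with cyclic quotient. -/
theorem metacyclic_of_squarefree_order (n : ℕ) (hn : Squarefree n)
    (G : Type*) [Group G] (hG : Nat.card G = n) :
    ∃ N : Subgroup G, ∃ _ : N.Normal, IsCyclic N ∧ IsCyclic (G ⧸ N) := by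
  subst hG
  have : Finite G := Nat.finite_of_card_ne_zero hn.ne_zero
  have : IsZGroup G := IsZGroup.of_squarefree hn
  exact ⟨commutator G, inferInstance, IsZGroup.isCyclic_commutator G,
    inferInstanceAs (IsCyclic (Abelianization G))⟩
end
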